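/- For all complex numbers a, b and all real 1 < p < 2, one has |b − a|^p ≤ (p−1)^{−p/2} · (Re((|b|^{p-2}b − |a|^{p-2}a)·conj(b−a)))^{p/2} · (|a|^p + |b|^p)^{(2−p)/2}, where the quantity Re((|b|^{p-2}b − |a|^{p-2}a)·conj(b−a)) is nonnegative. -/

import Mathlib

/-!
Write `r = ‖b‖ ≥ s = ‖a‖` and `c = Re (b * conj a) ≤ r * s`. The pairing equals
`(r - s) * (r ^ (p - 1) - s ^ (p - 1)) + (r ^ (p - 2) + s ^ (p - 2)) * (r * s - c)` and
`‖b - a‖ ^ 2 = (r - s) ^ 2 + 2 * (r * s - c)`. Concavity of `t ↦ t ^ (p - 1)` and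
`r ^ (p - 2) ≤ s ^ (p - 2)` bound the two summands below by `(p - 1) * r ^ (p - 2)` times the
matching summands of `‖b - a‖ ^ 2`, so `(p - 1) * ‖b - a‖ ^ 2 * max ‖a‖ ‖b‖ ^ (p - 2)` is at most
the pairing. Raising this to the power `p / 2` and using `max ‖a‖ ‖b‖ ^ p ≤ ‖a‖ ^ p + ‖b‖ ^ p`
gives the claim.
-/

open Real ComplexConjugate

noncomputable def dualMap (p : ℝ) (z : ℂ) : ℂ := (‖z‖ ^ (p - 2) : ℝ) * z

lemma mul_sub_mul_rpow_sub_one_le_rpow_sub_rpow {q r s : ℝ} (hq0 : 0 ≤ q) (hq1 : q ≤ 1)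
    (hr : 0 < r) (hs : 0 ≤ s) : q * (r - s) * r ^ (q - 1) ≤ r ^ q - s ^ q := by
  have bernoulli : (s / r) ^ q ≤ 1 + q * (s / r - 1) := by
    simpa using rpow_one_add_le_one_add_mul_self (s := s / r - 1)
      (by linarith [div_nonneg hs hr.le]) hq0 hq1
  have hrq : r ^ q = r ^ (q - 1) * r := by rw [← rpow_add_one hr.ne', sub_add_cancel]
  rw [div_rpow hs hr.le, div_le_iff₀ (rpow_pos_of_pos hr q)] at bernoulli
  rw [hrq] at bernoulli ⊢
  field_simp at bernoulli
  nlinarith [bernoulli]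

lemma rpow_sub_two_mul_sq {x p : ℝ} (hx : 0 ≤ x) (hp : p ≠ 0) : x ^ (p - 2) * x ^ 2 = x ^ p := by
  rw [← rpow_two, ← rpow_add' hx (by simpa using hp), sub_add_cancel]

lemma mul_sq_sub_mul_rpow_le_of_abs_le_mul {p r s c : ℝ} (hp1 : 1 ≤ p) (hp2 : p ≤ 2)
    (hs : 0 ≤ s) (hsr : s ≤ r) (hc : |c| ≤ r * s) :
    (p - 1) * (r ^ 2 + s ^ 2 - 2 * c) * r ^ (p - 2) ≤
      r ^ p + s ^ p - (r ^ (p - 2) + s ^ (p - 2)) * c := by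
  have hr : 0 ≤ r := hs.trans hsr
  rw [← rpow_sub_two_mul_sq hr (p := p) (by linarith),
    ← rpow_sub_two_mul_sq hs (p := p) (by linarith)]
  rcases hs.eq_or_lt with rfl | hs
  · obtain rfl : c = 0 := abs_nonpos_iff.1 (by simpa using hc)
    nlinarith [mul_nonneg (sub_nonneg.2 hp2) (mul_nonneg (rpow_nonneg hr (p - 2)) (sq_nonneg r))]
  have hsub_one {x : ℝ} (hx : 0 < x) : x ^ (p - 1) = x ^ (p - 2) * x := by
    rw [← rpow_add_one hx.ne']; ring_nf
  have tangent := mul_sub_mul_rpow_sub_one_le_rpow_sub_rpow (q := p - 1) (by linarith)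
    (by linarith) (hs.trans_le hsr) hs.le
  rw [hsub_one (hs.trans_le hsr), hsub_one hs, show p - 1 - 1 = p - 2 by ring] at tangent
  have hslope : 2 * (p - 1) * r ^ (p - 2) ≤ r ^ (p - 2) + s ^ (p - 2) := by
    nlinarith [rpow_le_rpow_of_nonpos hs hsr (by linarith : p - 2 ≤ 0), rpow_nonneg hr (p - 2)]
  have hcrs : c ≤ r * s := (abs_le.1 hc).2
  nlinarith [mul_le_mul_of_nonneg_left tangent (sub_nonneg.2 hsr),
    mul_le_mul_of_nonneg_right hslope (sub_nonneg.2 hcrs)]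

lemma re_dualMap_sub_mul_conj_sub {p : ℝ} (hp : p ≠ 0) (a b : ℂ) :
    ((dualMap p b - dualMap p a) * conj (b - a)).re =
      ‖a‖ ^ p + ‖b‖ ^ p - (‖a‖ ^ (p - 2) + ‖b‖ ^ (p - 2)) * (b * conj a).re := by
  have hnorm (z : ℂ) : ‖z‖ ^ (p - 2) * (z.re * z.re + z.im * z.im) = ‖z‖ ^ p := by
    rw [← Complex.normSq_apply, ← Complex.sq_norm, rpow_sub_two_mul_sq (norm_nonneg z) hp]
  simp only [dualMap, Complex.mul_re, Complex.sub_re, Complex.sub_im, Complex.conj_re,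
    Complex.conj_im, Complex.mul_im, Complex.ofReal_re, Complex.ofReal_im]
  linear_combination hnorm a + hnorm b

lemma dualMap_sub_mul_conj_sub_comm (p : ℝ) (a b : ℂ) :
    (dualMap p a - dualMap p b) * conj (a - b) = (dualMap p b - dualMap p a) * conj (b - a) := by
  simp only [map_sub]; ring

lemma mul_sq_norm_sub_mul_rpow_max_le {p : ℝ} (hp1 : 1 ≤ p) (hp2 : p ≤ 2) (a b : ℂ) :
    (p - 1) * ‖b - a‖ ^ 2 * max ‖a‖ ‖b‖ ^ (p - 2) ≤
      ((dualMap p b - dualMap p a) * conj (b - a)).re := by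
  wlog hab : ‖a‖ ≤ ‖b‖ generalizing a b
  · rw [max_comm, norm_sub_rev, ← dualMap_sub_mul_conj_sub_comm]
    exact this b a (le_of_not_ge hab)
  have hc : |(b * conj a).re| ≤ ‖b‖ * ‖a‖ := by
    simpa using Complex.abs_re_le_norm (b * conj a)
  rw [max_eq_right hab, re_dualMap_sub_mul_conj_sub (by linarith), Complex.sq_norm,
    Complex.normSq_sub, ← Complex.sq_norm, ← Complex.sq_norm]
  linear_combination mul_sq_sub_mul_rpow_le_of_abs_le_mul hp1 hp2 (norm_nonneg a) hab hc

lemma rpow_le_of_mul_sq_mul_rpow_le {p x M N S : ℝ} (hp1 : 1 < p) (hp2 : p ≤ 2) (hx : 0 ≤ x)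
    (hM : 0 < M) (hMN : M ^ p ≤ N) (h : (p - 1) * x ^ 2 * M ^ (p - 2) ≤ S) :
    x ^ p ≤ (p - 1) ^ (-(p / 2)) * S ^ (p / 2) * N ^ ((2 - p) / 2) := by
  have hp : 0 < p - 1 := sub_pos.2 hp1
  have hS : 0 ≤ S := le_trans (by positivity) h
  have hsq : x ^ 2 ≤ (p - 1)⁻¹ * S * M ^ (2 - p) := by
    have hM1 : M ^ (p - 2) * M ^ (2 - p) = 1 := by rw [← rpow_add hM]; simp
    calc x ^ 2 = (p - 1) * x ^ 2 * M ^ (p - 2) * ((p - 1)⁻¹ * M ^ (2 - p)) := by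
          field_simp; rw [mul_assoc, hM1, mul_one]
      _ ≤ S * ((p - 1)⁻¹ * M ^ (2 - p)) := by gcongr
      _ = (p - 1)⁻¹ * S * M ^ (2 - p) := by ring
  calc x ^ p = (x ^ 2) ^ (p / 2) := by
        rw [← rpow_two, ← rpow_mul hx]; ring_nf
    _ ≤ ((p - 1)⁻¹ * S * M ^ (2 - p)) ^ (p / 2) := by gcongr
    _ = (p - 1) ^ (-(p / 2)) * S ^ (p / 2) * (M ^ p) ^ ((2 - p) / 2) := by
        rw [mul_rpow (by positivity) (by positivity), mul_rpow (by positivity) hS,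
          inv_rpow hp.le, ← rpow_neg hp.le, ← rpow_mul hM.le, ← rpow_mul hM.le]
        ring_nf
    _ ≤ (p - 1) ^ (-(p / 2)) * S ^ (p / 2) * N ^ ((2 - p) / 2) := by gcongr

theorem simon_lt_two (p : ℝ) (hp1 : 1 < p) (hp2 : p < 2) (a b : ℂ) :
    0 ≤ (((‖b‖ ^ (p - 2) : ℝ) * b - (‖a‖ ^ (p - 2) : ℝ) * a) *
          (starRingEnd ℂ) (b - a)).re ∧
    ‖b - a‖ ^ p ≤
      (p - 1) ^ (-(p / 2)) *
        ((((‖b‖ ^ (p - 2) : ℝ) * b - (‖a‖ ^ (p - 2) : ℝ) * a) *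
            (starRingEnd ℂ) (b - a)).re) ^ (p / 2) *
        (‖a‖ ^ p + ‖b‖ ^ p) ^ ((2 - p) / 2) := by
  have key := mul_sq_norm_sub_mul_rpow_max_le hp1.le hp2.le a b
  have hM : 0 ≤ max ‖a‖ ‖b‖ := le_max_of_le_left (norm_nonneg a)
  have hS : 0 ≤ ((dualMap p b - dualMap p a) * conj (b - a)).re :=
    le_trans (mul_nonneg (mul_nonneg (sub_nonneg.2 hp1.le) (sq_nonneg _)) (rpow_nonneg hM _)) key
  refine ⟨hS, ?_⟩
  rcases hM.eq_or_lt with hM | hM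
  · obtain ⟨rfl, rfl⟩ : a = 0 ∧ b = 0 :=
      ⟨norm_le_zero_iff.1 (hM ▸ le_max_left _ _), norm_le_zero_iff.1 (hM ▸ le_max_right _ _)⟩
    simp [zero_rpow (by linarith : p ≠ 0), zero_rpow (by linarith : p / 2 ≠ 0)]
  · have hMN : max ‖a‖ ‖b‖ ^ p ≤ ‖a‖ ^ p + ‖b‖ ^ p :=
      (rpow_max (norm_nonneg a) (norm_nonneg b) (by linarith)).trans_le
        (max_le_add_of_nonneg (by positivity) (by positivity))
    exact rpow_le_of_mul_sq_mul_rpow_le hp1 hp2.le (norm_nonneg _) hM hMN key
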